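/- arXiv:1711.11412 — 2 statements merged into one kernel-verified Lean document; each statement's English description precedes it below -/
import Mathlib

section
/- Let T be a tree, let w : V(T) → ℕ with w(V(T)) > 0, and let w_max = max{w(u) : u ∈ V(T)}. Call a nonnegative integer W nice if there is a nonempty set S of vertices of T such that T[S] is connected, W ≤ w(S) ≤ W + w_max, and w(D) ≤ W for every connected component D of T − S. Let W_min be the smallest nice nonnegative integer (it exists, since W = w(V(T)) is nice). Then W_min ≤ cs(T,w) ≤ W_min + w_max ≤ 2·cs(T,w). -/
/-- Total weight of a set of vertices. -/
noncomputable def setWeight {V : Type*} (w : V → ℕ) (A : Set V) : ℕ := ∑ᶠ u ∈ A, w u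

/-- `C` is the vertex set of a connected component of the subgraph of `G` induced by `S`. -/
def IsCompOf {V : Type*} (G : SimpleGraph V) (S C : Set V) : Prop :=
  C ⊆ S ∧ (G.induce C).Connected ∧ ∀ u ∈ C, ∀ v ∈ S, G.Adj u v → v ∈ C

/-- `S` is a (nonempty) `w`-safe set of `G`. -/
def IsSafeSet {V : Type*} (G : SimpleGraph V) (w : V → ℕ) (S : Set V) : Prop :=
  S.Nonempty ∧ ∀ C D : Set V, IsCompOf G S C → IsCompOf G Sᶜ D →
    (∃ u ∈ C, ∃ v ∈ D, G.Adj u v) → setWeight w D ≤ setWeight w C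

/-- The connected safe number `cs(G,w)`. -/
noncomputable def connSafeNum {V : Type*} (G : SimpleGraph V) (w : V → ℕ) : ℕ :=
  sInf {m | ∃ S : Set V, IsSafeSet G w S ∧ (G.induce S).Connected ∧ setWeight w S = m}

/-!
Since trees are connected, a connected set `S` is safe exactly when every component of `T - S`
weighs at most `w(S)`: each such component is joined to `S` by an edge. Hence a minimum connected
safe set witnesses that `cs(T,w)` is nice, giving `W_min ≤ cs`, while a witness `S` of `W_min`
is a connected safe set of weight at most `W_min + w_max`, giving `cs ≤ W_min + w_max`. Finally
every vertex lies in a minimum connected safe set or in a component of its complement, so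
`w_max ≤ cs`.
-/

open SimpleGraph Set

section Weight

variable {V : Type*} [Finite V] (w : V → ℕ)

lemma setWeight_mono {A B : Set V} (h : A ⊆ B) : setWeight w A ≤ setWeight w B := by
  simp only [setWeight, finsum_mem_eq_finite_toFinset_sum _ (toFinite _)]
  exact Finset.sum_le_sum_of_subset (Finite.toFinset_subset_toFinset.2 h)

lemma single_le_setWeight {A : Set V} {u : V} (hu : u ∈ A) : w u ≤ setWeight w A :=
  calc w u = setWeight w {u} := finsum_mem_singleton.symm
    _ ≤ setWeight w A := setWeight_mono w (singleton_subset_iff.2 hu)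

end Weight

section Components

variable {V : Type*} {G : SimpleGraph V}

lemma IsCompOf.nonempty {X C : Set V} (hC : IsCompOf G X C) : C.Nonempty :=
  nonempty_coe_sort.1 hC.2.1.nonempty

lemma not_isCompOf_compl_univ {D : Set V} : ¬ IsCompOf G univᶜ D := fun hD =>
  let ⟨_, hd⟩ := hD.nonempty
  hD.1 hd (mem_univ _)

lemma IsCompOf.eq_of_connected {S C : Set V} (hS : (G.induce S).Connected)
    (hC : IsCompOf G S C) : C = S := by
  refine Subset.antisymm hC.1 fun v hv => ?_
  by_contra hvC
  obtain ⟨u, huC⟩ := hC.nonempty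
  obtain ⟨p⟩ := hS.preconnected ⟨u, hC.1 huC⟩ ⟨v, hv⟩
  obtain ⟨d, -, hfst, hsnd⟩ := p.exists_boundary_dart {x | x.1 ∈ C} huC hvC
  exact hsnd (hC.2.2 _ hfst _ d.snd.2 (by simpa using d.adj))

lemma IsCompOf.exists_adj_of_connected (hG : G.Connected) {S D : Set V}
    (hD : IsCompOf G Sᶜ D) (hS : S.Nonempty) : ∃ a ∈ D, ∃ b ∈ S, G.Adj a b := by
  obtain ⟨u, huD⟩ := hD.nonempty
  obtain ⟨v, hvS⟩ := hS
  obtain ⟨p⟩ := hG.preconnected u v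
  obtain ⟨d, -, hfst, hsnd⟩ := p.exists_boundary_dart D huD fun hvD => hD.1 hvD hvS
  refine ⟨d.fst, hfst, d.snd, ?_, d.adj⟩
  by_contra hS'
  exact hsnd (hD.2.2 _ hfst _ hS' d.adj)

/-- A maximal connected subset of `X` through `u` is closed under adjacency within `X`, since
adding an adjacent vertex keeps it connected. -/
lemma exists_isCompOf_mem [Finite V] {X : Set V} {u : V} (hu : u ∈ X) :
    ∃ C, IsCompOf G X C ∧ u ∈ C := by
  obtain ⟨C, ⟨huC, hCX, hC⟩, hmax⟩ := (toFinite {C : Set V | u ∈ C ∧ C ⊆ X ∧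
    (G.induce C).Connected}).exists_maximal ⟨{u}, rfl, singleton_subset_iff.2 hu, by simp⟩
  refine ⟨C, ⟨hCX, hC, fun a ha b hb hab => ?_⟩, huC⟩
  have hCb : (G.induce (C ∪ {b})).Connected :=
    connected_induce_union hC.preconnected (by simp) ha rfl hab
  exact hmax ⟨Or.inl huC, union_subset hCX (singleton_subset_iff.2 hb), hCb⟩
    subset_union_left (Or.inr rfl)

end Components

section Safe

variable {V : Type*} {G : SimpleGraph V} {w : V → ℕ} {S : Set V}

lemma IsSafeSet.setWeight_le_of_isCompOf_compl (hG : G.Connected) (hS : IsSafeSet G w S)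
    (hSc : (G.induce S).Connected) {D : Set V} (hD : IsCompOf G Sᶜ D) :
    setWeight w D ≤ setWeight w S := by
  obtain ⟨a, ha, b, hb, hab⟩ := hD.exists_adj_of_connected hG hS.1
  exact hS.2 S D ⟨Subset.rfl, hSc, fun _ _ _ hv _ => hv⟩ hD ⟨b, hb, a, ha, hab.symm⟩

lemma isSafeSet_of_forall_isCompOf_compl (hS : S.Nonempty) (hSc : (G.induce S).Connected)
    (h : ∀ D, IsCompOf G Sᶜ D → setWeight w D ≤ setWeight w S) : IsSafeSet G w S :=
  ⟨hS, fun _ D hC hD _ => hC.eq_of_connected hSc ▸ h D hD⟩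

lemma IsSafeSet.le_setWeight [Finite V] (hG : G.Connected) (hS : IsSafeSet G w S)
    (hSc : (G.induce S).Connected) (u : V) : w u ≤ setWeight w S := by
  by_cases huS : u ∈ S
  · exact single_le_setWeight w huS
  · obtain ⟨D, hD, huD⟩ := exists_isCompOf_mem (G := G) (mem_compl huS)
    exact (single_le_setWeight w huD).trans (hS.setWeight_le_of_isCompOf_compl hG hSc hD)

lemma connected_induce_univ (hG : G.Connected) : (G.induce univ).Connected :=
  (induceUnivIso G).connected_iff.2 hG

lemma isSafeSet_univ (hG : G.Connected) : IsSafeSet G w univ :=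
  isSafeSet_of_forall_isCompOf_compl (@univ_nonempty _ hG.nonempty) (connected_induce_univ hG)
    fun _ hD => (not_isCompOf_compl_univ hD).elim

lemma connSafeNum_le (hS : IsSafeSet G w S) (hSc : (G.induce S).Connected) :
    connSafeNum G w ≤ setWeight w S :=
  Nat.sInf_le ⟨S, hS, hSc, rfl⟩

lemma exists_setWeight_eq_connSafeNum (hG : G.Connected) :
    ∃ S, IsSafeSet G w S ∧ (G.induce S).Connected ∧ setWeight w S = connSafeNum G w :=
  Nat.sInf_mem (s := {m | ∃ S, IsSafeSet G w S ∧ (G.induce S).Connected ∧ setWeight w S = m})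
    ⟨_, univ, isSafeSet_univ hG, connected_induce_univ hG, rfl⟩

end Safe

theorem nice_Wmin_approx_general {V : Type*} [Fintype V] (G : SimpleGraph V) (hT : G.IsTree)
    (w : V → ℕ)
    (wmax : ℕ) (hwmax : wmax = ⨆ u, w u)
    (Nice : ℕ → Prop)
    (hNice : ∀ W : ℕ, Nice W ↔ ∃ S : Set V, S.Nonempty ∧ (G.induce S).Connected ∧
        W ≤ setWeight w S ∧ setWeight w S ≤ W + wmax ∧
        ∀ D : Set V, IsCompOf G Sᶜ D → setWeight w D ≤ W)
    (Wmin : ℕ) (hWmin : Wmin = sInf {W | Nice W}) :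
    Wmin ≤ connSafeNum G w ∧ connSafeNum G w ≤ Wmin + wmax ∧
      Wmin + wmax ≤ 2 * connSafeNum G w := by
  have hG := hT.connected
  obtain ⟨S₀, hS₀, hS₀c, hS₀w⟩ := exists_setWeight_eq_connSafeNum (w := w) hG
  have hWmin_le : Wmin ≤ connSafeNum G w := hWmin ▸ Nat.sInf_le ((hNice _).2
    ⟨S₀, hS₀.1, hS₀c, hS₀w.ge, by omega,
      fun D hD => hS₀w ▸ hS₀.setWeight_le_of_isCompOf_compl hG hS₀c hD⟩)
  have hNice_univ : Nice (setWeight w univ) := (hNice _).2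
    ⟨univ, @univ_nonempty _ hG.nonempty, connected_induce_univ hG, le_rfl, Nat.le_add_right _ _,
      fun _ hD => (not_isCompOf_compl_univ hD).elim⟩
  obtain ⟨S₁, hS₁, hS₁c, hW₁, hW₁', hS₁D⟩ := (hNice _).1 (hWmin ▸ Nat.sInf_mem ⟨_, hNice_univ⟩)
  have hcs_le : connSafeNum G w ≤ Wmin + wmax :=
    (connSafeNum_le (isSafeSet_of_forall_isCompOf_compl hS₁ hS₁c
      fun D hD => (hS₁D D hD).trans hW₁) hS₁c).trans hW₁'
  have hwmax_le : wmax ≤ connSafeNum G w :=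
    hwmax ▸ ciSup_le' fun u => hS₀w ▸ hS₀.le_setWeight hG hS₀c u
  exact ⟨hWmin_le, hcs_le, by omega⟩

theorem nice_Wmin_approx {V : Type*} [Fintype V] (G : SimpleGraph V) (hT : G.IsTree)
    (w : V → ℕ) (hw : 0 < setWeight w Set.univ)
    (wmax : ℕ) (hwmax : wmax = ⨆ u, w u)
    (Nice : ℕ → Prop)
    (hNice : ∀ W : ℕ, Nice W ↔ ∃ S : Set V, S.Nonempty ∧ (G.induce S).Connected ∧
        W ≤ setWeight w S ∧ setWeight w S ≤ W + wmax ∧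
        ∀ D : Set V, IsCompOf G Sᶜ D → setWeight w D ≤ W)
    (Wmin : ℕ) (hWmin : Wmin = sInf {W | Nice W}) :
    Wmin ≤ connSafeNum G w ∧ connSafeNum G w ≤ Wmin + wmax ∧
      Wmin + wmax ≤ 2 * connSafeNum G w :=
  nice_Wmin_approx_general G hT w wmax hwmax Nice hNice Wmin hWmin
end

section
/- Let c₁, …, c_n and K be positive integers with max{c_i : i ∈ [n]} < K < c₁ + … + c_n. Let T be a star with center vertex x and leaves y₁, …, y_{n+1}, and let w : V(T) → ℕ be given by w(x) = 1, w(y_i) = c_i for i ∈ [n], and w(y_{n+1}) = K + 1. Then cs(T,w) = K + 1 if and only if there is a subset I of {1, …, n} with Σ_{i∈I} c_i = K. -/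
/-- The star with center `none` and leaves `some i` for `i : Fin m`. -/
def starGraph (m : ℕ) : SimpleGraph (Option (Fin m)) where
  Adj a b := (a = none ∧ b ≠ none) ∨ (b = none ∧ a ≠ none)
  symm := ⟨by intro a b h; tauto⟩
  loopless := ⟨by rintro a (⟨h1, h2⟩ | ⟨h1, h2⟩) <;> exact h2 h1⟩

/-- The weight function on the star: the center gets weight `1`, the first `n` leaves get
weights `c 0, …, c (n-1)`, and the last leaf gets weight `K + 1`. -/
def starW (n : ℕ) (c : Fin n → ℕ) (K : ℕ) : Option (Fin (n + 1)) → ℕ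
  | none => 1
  | some i => if h : (i : ℕ) < n then c ⟨i, h⟩ else K + 1

/-!
In a star, a connected set either contains the centre, and is then safe as soon as it weighs at
least as much as every leaf it misses, or is a single leaf, which here is never safe because the
rest of the star outweighs it. As the leaf `y_{n+1}` weighs `K + 1`, every connected safe set
weighs at least `K + 1`, and weight exactly `K + 1` is attained only by the centre together with
leaves `y_i`, `i ∈ I`, where `∑_{i ∈ I} c_i = K`.
-/

open Finset

lemma setWeight_singleton {V : Type*} (w : V → ℕ) (a : V) : setWeight w {a} = w a := by
  simp [setWeight]

lemma setWeight_eq_sum_indicator {V : Type*} [Fintype V] (w : V → ℕ) (A : Set V) :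
    setWeight w A = ∑ u, A.indicator w u := by
  rw [setWeight, finsum_mem_def, finsum_eq_sum_of_fintype]

lemma isCompOf_self {V : Type*} {G : SimpleGraph V} {S : Set V} (h : (G.induce S).Connected) :
    IsCompOf G S S :=
  ⟨subset_rfl, h, fun _ _ _ hv _ => hv⟩

namespace starGraph

variable {m : ℕ}

lemma connected_induce_of_none_mem {S : Set (Option (Fin m))} (hS : none ∈ S) :
    ((starGraph m).induce S).Connected := by
  have toCenter (u : S) : ((starGraph m).induce S).Reachable u ⟨none, hS⟩ := by
    by_cases hu : u.1 = none
    · rw [show u = ⟨none, hS⟩ from Subtype.ext hu]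
    · exact SimpleGraph.Adj.reachable (Or.inr ⟨rfl, hu⟩)
  have : Nonempty S := ⟨⟨none, hS⟩⟩
  exact .mk fun u v => (toCenter u).trans (toCenter v).symm

lemma induce_eq_bot_of_none_notMem {S : Set (Option (Fin m))} (hS : none ∉ S) :
    (starGraph m).induce S = ⊥ := by
  ext u v
  simp only [SimpleGraph.comap_adj, Function.Embedding.subtype_apply, SimpleGraph.bot_adj,
    iff_false]
  rintro (⟨hu, -⟩ | ⟨hv, -⟩)
  · exact hS (hu ▸ u.2)
  · exact hS (hv ▸ v.2)

lemma exists_eq_singleton_of_connected {S : Set (Option (Fin m))} (hS : none ∉ S)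
    (hconn : ((starGraph m).induce S).Connected) : ∃ j, S = {some j} := by
  rw [induce_eq_bot_of_none_notMem hS, SimpleGraph.connected_bot_iff, Set.subsingleton_coe,
    Set.nonempty_coe_sort] at hconn
  obtain ⟨hsub, a, ha⟩ := hconn
  obtain ⟨j, rfl⟩ := Option.ne_none_iff_exists'.1 (ne_of_mem_of_not_mem ha hS)
  exact ⟨j, hsub.eq_singleton_of_mem ha⟩

lemma eq_of_isCompOf_of_none_mem {S C : Set (Option (Fin m))} (hS : none ∈ S)
    (hC : IsCompOf (starGraph m) S C) : C = S := by
  obtain ⟨hsub, hconn, hclosed⟩ := hC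
  obtain ⟨u, hu⟩ := hconn.nonempty
  have hnone : none ∈ C := by
    by_cases h : u = none
    · exact h ▸ hu
    · exact hclosed u hu none hS (Or.inr ⟨rfl, h⟩)
  refine hsub.antisymm fun v hv => ?_
  by_cases h : v = none
  · exact h ▸ hnone
  · exact hclosed none hnone v hv (Or.inl ⟨rfl, h⟩)

lemma isCompOf_singleton {T : Set (Option (Fin m))} (hT : none ∉ T) {j : Fin m}
    (hj : some j ∈ T) : IsCompOf (starGraph m) T {some j} := by
  refine ⟨Set.singleton_subset_iff.2 hj, ?_, ?_⟩
  · rw [SimpleGraph.induce_singleton_eq_top]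
    exact SimpleGraph.connected_top
  · rintro u rfl v hv (⟨h, -⟩ | ⟨rfl, -⟩)
    · cases h
    · exact absurd hv hT

variable (w : Option (Fin m) → ℕ)

lemma isSafeSet_of_none_mem {S : Set (Option (Fin m))} (hS : none ∈ S)
    (h : ∀ j, some j ∉ S → w (some j) ≤ setWeight w S) : IsSafeSet (starGraph m) w S := by
  refine ⟨⟨none, hS⟩, fun C D hC hD _ => ?_⟩
  obtain ⟨j, rfl⟩ := exists_eq_singleton_of_connected (fun h => hD.1 h hS) hD.2.1
  rw [eq_of_isCompOf_of_none_mem hS hC, setWeight_singleton]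
  exact h j (hD.1 rfl)

lemma le_setWeight_of_isSafeSet {S : Set (Option (Fin m))} (hsafe : IsSafeSet (starGraph m) w S)
    (hS : none ∈ S) {j : Fin m} (hj : some j ∉ S) : w (some j) ≤ setWeight w S := by
  have := hsafe.2 S {some j} (isCompOf_self (connected_induce_of_none_mem hS))
    (isCompOf_singleton (T := Sᶜ) (not_not.2 hS) hj)
    ⟨none, hS, some j, rfl, Or.inl ⟨rfl, by simp⟩⟩
  rwa [setWeight_singleton] at this

lemma exists_eq_singleton_of_isSafeSet {S : Set (Option (Fin m))}
    (hsafe : IsSafeSet (starGraph m) w S) (hconn : ((starGraph m).induce S).Connected)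
    (hS : none ∉ S) : ∃ j, S = {some j} ∧ setWeight w {some j}ᶜ ≤ w (some j) := by
  obtain ⟨j, rfl⟩ := exists_eq_singleton_of_connected hS hconn
  have := hsafe.2 _ _ (isCompOf_self hconn)
    (isCompOf_self (connected_induce_of_none_mem (S := {some j}ᶜ) hS))
    ⟨some j, rfl, none, hS, Or.inr ⟨rfl, by simp⟩⟩
  rw [setWeight_singleton] at this
  exact ⟨j, rfl, this⟩

end starGraph

section StarWeights

variable {n : ℕ} {c : Fin n → ℕ} {K : ℕ}

@[simp] lemma starW_none : starW n c K none = 1 := rfl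

@[simp] lemma starW_castSucc (i : Fin n) : starW n c K (some i.castSucc) = c i := by
  simp [starW]

@[simp] lemma starW_last : starW n c K (some (Fin.last n)) = K + 1 := by
  simp [starW]

open scoped Classical in
lemma setWeight_starW (S : Set (Option (Fin (n + 1)))) :
    setWeight (starW n c K) S = (if none ∈ S then 1 else 0) +
      ∑ i with some i.castSucc ∈ S, c i + (if some (Fin.last n) ∈ S then K + 1 else 0) := by
  simp [setWeight_eq_sum_indicator, Fintype.sum_option, Fin.sum_univ_castSucc,
    Set.indicator_apply, Finset.sum_filter, add_assoc]

lemma starW_le (hmax : ∀ i, c i < K) (j : Fin (n + 1)) : starW n c K (some j) ≤ K + 1 := by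
  induction j using Fin.lastCases with
  | last => simp
  | cast i => simpa using (hmax i).le.trans K.le_succ

lemma starW_lt_setWeight_compl (hmax : ∀ i, c i < K) (hsum : K < ∑ i, c i) (j : Fin (n + 1)) :
    starW n c K (some j) < setWeight (starW n c K) {some j}ᶜ := by
  induction j using Fin.lastCases with
  | last =>
    have hw : setWeight (starW n c K) {some (Fin.last n)}ᶜ = 1 + ∑ i, c i := by
      simp [setWeight_starW]
    rw [starW_last, hw]
    omega
  | cast i =>
    have hw : setWeight (starW n c K) {some i.castSucc}ᶜ =
        1 + ∑ i' with i' ≠ i, c i' + (K + 1) := by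
      simp [setWeight_starW, (Fin.castSucc_lt_last i).ne']
    rw [starW_castSucc, hw]
    have := hmax i
    omega

end StarWeights

section StarSafeSets

variable {n : ℕ} {c : Fin n → ℕ} {K : ℕ} {S : Set (Option (Fin (n + 1)))}

lemma none_mem_of_isSafeSet (hmax : ∀ i, c i < K) (hsum : K < ∑ i, c i)
    (hsafe : IsSafeSet (starGraph (n + 1)) (starW n c K) S)
    (hconn : ((starGraph (n + 1)).induce S).Connected) : none ∈ S := by
  by_contra hS
  obtain ⟨j, rfl, hle⟩ := starGraph.exists_eq_singleton_of_isSafeSet _ hsafe hconn hS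
  exact (starW_lt_setWeight_compl hmax hsum j).not_ge hle

lemma succ_le_setWeight_of_isSafeSet (hmax : ∀ i, c i < K) (hsum : K < ∑ i, c i)
    (hsafe : IsSafeSet (starGraph (n + 1)) (starW n c K) S)
    (hconn : ((starGraph (n + 1)).induce S).Connected) : K + 1 ≤ setWeight (starW n c K) S := by
  have hS := none_mem_of_isSafeSet hmax hsum hsafe hconn
  by_cases hlast : some (Fin.last n) ∈ S
  · simp [setWeight_starW, hS, hlast]
  · simpa using starGraph.le_setWeight_of_isSafeSet _ hsafe hS hlast

lemma exists_isSafeSet_setWeight_eq_succ_iff (hmax : ∀ i, c i < K) (hsum : K < ∑ i, c i) :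
    (∃ S, IsSafeSet (starGraph (n + 1)) (starW n c K) S ∧
        ((starGraph (n + 1)).induce S).Connected ∧ setWeight (starW n c K) S = K + 1) ↔
      ∃ I : Finset (Fin n), ∑ i ∈ I, c i = K := by
  classical
  constructor
  · rintro ⟨S, hsafe, hconn, hw⟩
    have hS := none_mem_of_isSafeSet hmax hsum hsafe hconn
    by_cases hlast : some (Fin.last n) ∈ S
    · simp [setWeight_starW, hS, hlast] at hw
    · simp only [setWeight_starW, hS, hlast, if_true, if_false] at hw
      exact ⟨univ.filter fun i => some i.castSucc ∈ S, by omega⟩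
  · rintro ⟨I, hI⟩
    set S : Set (Option (Fin (n + 1))) := insert none ((fun i : Fin n => some i.castSucc) '' I)
    have hw : setWeight (starW n c K) S = K + 1 := by
      simp [S, setWeight_starW, hI, add_comm]
    refine ⟨S, starGraph.isSafeSet_of_none_mem _ (by simp [S]) fun j _ => ?_,
      starGraph.connected_induce_of_none_mem (by simp [S]), hw⟩
    exact hw ▸ starW_le hmax j

end StarSafeSets

theorem connSafeNum_star_eq_iff_subsetSum_general (n : ℕ) (c : Fin n → ℕ) (K : ℕ)
    (hmax : ∀ i, c i < K) (hsum : K < ∑ i, c i) :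
    connSafeNum (starGraph (n + 1)) (starW n c K) = K + 1 ↔
      ∃ I : Finset (Fin n), ∑ i ∈ I, c i = K := by
  have hne : {m | ∃ S, IsSafeSet (starGraph (n + 1)) (starW n c K) S ∧
      ((starGraph (n + 1)).induce S).Connected ∧ setWeight (starW n c K) S = m}.Nonempty :=
    ⟨_, Set.univ, starGraph.isSafeSet_of_none_mem _ trivial fun _ h => absurd trivial h,
      starGraph.connected_induce_of_none_mem trivial, rfl⟩
  rw [connSafeNum, csInf_eq_iff hne, ← exists_isSafeSet_setWeight_eq_succ_iff hmax hsum]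
  refine and_iff_left_of_imp fun _ => ?_
  rintro _ ⟨S, hsafe, hconn, rfl⟩
  exact succ_le_setWeight_of_isSafeSet hmax hsum hsafe hconn

theorem connSafeNum_star_eq_iff_subsetSum (n : ℕ) (c : Fin n → ℕ) (K : ℕ)
    (hc : ∀ i, 0 < c i) (hK : 0 < K) (hmax : ∀ i, c i < K) (hsum : K < ∑ i, c i) :
    connSafeNum (starGraph (n + 1)) (starW n c K) = K + 1 ↔
      ∃ I : Finset (Fin n), ∑ i ∈ I, c i = K :=
  connSafeNum_star_eq_iff_subsetSum_general n c K hmax hsum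
end
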